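/- arXiv:2412.01610 — 3 statements merged into one kernel-verified Lean document; each statement's English description precedes it below -/
import Mathlib

section
/- For every r > 0, all real θ, φ, and every phase ω ∈ (−π/2, π/2), the satellite position X(θ, ω, φ, r) lies in the orbital plane through the origin with unit normal n(θ, φ) = (sin θ · sin φ, −cos θ · sin φ, cos φ); that is, the Euclidean inner product ⟨X(θ, ω, φ, r), n(θ, φ)⟩ equals 0. -/
/-!
Since `cos ω > 0`, the angle `θ̂ = arctan (sin ω cos φ / cos ω)` is the polar angle of the
point `(cos ω, sin ω cos φ)`, whose length is `ρ`; hence `ρ sin θ̂ = sin ω cos φ`. Rotating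
by `θ`, the normal component of `X` is `r sin φ (sin ω cos φ - ρ sin θ̂) = 0`.
-/

open Real

/-- The position of a satellite with orbit longitude `θ`, phase `ω`, orbit inclination
`φ` and orbit radius `r`:
`X(θ, ω, φ, r) = (r·ρ·cos(θ̂ + θ), r·ρ·sin(θ̂ + θ), r·sin ω·sin φ)`, where
`ρ = √(cos²ω + sin²ω·cos²φ)` and `θ̂ = arctan(tan ω · cos φ)`. -/
noncomputable def satPos (θ ω φ r : ℝ) : EuclideanSpace ℝ (Fin 3) :=
  WithLp.toLp 2 ![r * Real.sqrt (cos ω ^ 2 + sin ω ^ 2 * cos φ ^ 2) *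
      cos (arctan (tan ω * cos φ) + θ),
    r * Real.sqrt (cos ω ^ 2 + sin ω ^ 2 * cos φ ^ 2) *
      sin (arctan (tan ω * cos φ) + θ),
    r * sin ω * sin φ]

/-- The unit normal of the orbital plane with ascending-node longitude `θ` and
inclination `φ`: `n(θ, φ) = (sin θ · sin φ, −cos θ · sin φ, cos φ)`. -/
noncomputable def orbitNormal (θ φ : ℝ) : EuclideanSpace ℝ (Fin 3) :=
  WithLp.toLp 2 ![sin θ * sin φ, -cos θ * sin φ, cos φ]

theorem sqrt_sq_add_sq_mul_sin_arctan_div {x : ℝ} (hx : 0 < x) (y : ℝ) :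
    √(x ^ 2 + y ^ 2) * sin (arctan (y / x)) = y := by
  have hscale : √(x ^ 2 + y ^ 2) = x * √(1 + (y / x) ^ 2) := by
    rw [← sqrt_sq hx.le, ← sqrt_mul (sq_nonneg x), sqrt_sq hx.le]
    congr 1
    field_simp
  rw [sin_arctan, hscale]
  field_simp

theorem inner_orbitNormal (R α z θ φ : ℝ) :
    inner ℝ !₂[R * cos (α + θ), R * sin (α + θ), z] (orbitNormal θ φ) =
      z * cos φ - R * sin α * sin φ := by
  simp only [orbitNormal, PiLp.inner_apply, RCLike.inner_apply, Fin.sum_univ_three,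
    Matrix.cons_val_zero, Matrix.cons_val_one, Matrix.cons_val_two, Matrix.head_cons,
    Matrix.tail_cons, conj_trivial, cos_add, sin_add]
  linear_combination -R * sin α * sin φ * sin_sq_add_cos_sq θ

theorem satPos_mem_orbitalPlane_general (r : ℝ) (θ φ ω : ℝ)
    (hω : ω ∈ Set.Ioo (-(π / 2)) (π / 2)) :
    (inner ℝ (satPos θ ω φ r) (orbitNormal θ φ) : ℝ) = 0 := by
  have hcos : 0 < cos ω := cos_pos_of_mem_Ioo hω
  have hslope : tan ω * cos φ = sin ω * cos φ / cos ω := by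
    rw [tan_eq_sin_div_cos]
    ring
  have hradius : cos ω ^ 2 + sin ω ^ 2 * cos φ ^ 2 = cos ω ^ 2 + (sin ω * cos φ) ^ 2 := by
    ring
  have hheight := sqrt_sq_add_sq_mul_sin_arctan_div hcos (sin ω * cos φ)
  rw [satPos, inner_orbitNormal, hslope, hradius]
  linear_combination -(r * sin φ) * hheight

/-- **Satellites lie in their orbital plane.**
For every `r > 0`, all real `θ, φ`, and every phase `ω ∈ (−π/2, π/2)`, the satellite
position `X(θ, ω, φ, r)` is orthogonal to the unit normal `n(θ, φ)` of the orbital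
plane through the origin, i.e. `⟨X(θ, ω, φ, r), n(θ, φ)⟩ = 0`. -/
theorem satPos_mem_orbitalPlane (r : ℝ) (hr : 0 < r) (θ φ ω : ℝ)
    (hω : ω ∈ Set.Ioo (-(π / 2)) (π / 2)) :
    (inner ℝ (satPos θ ω φ r) (orbitNormal θ φ) : ℝ) = 0 :=
  satPos_mem_orbitalPlane_general r θ φ ω hω
end

section
/- Let 0 < e < r, let N_o, N_s ≥ 1 be integers, let φ, l_u ∈ ℝ, and let θ̄ and ω̄ be independent random variables uniformly distributed on [0, 2π/N_o] and [0, 2π/N_s] respectively. Let D = min over i = 1,…,N_o and j = 1,…,N_s of ‖X_{i,j} − u‖. Then for every d with r − e < d < √(r² − e²), the complementary distribution function satisfies: P(D > d) = (N_o·N_s/(4π²)) · ∫₀^{2π/N_o} ∫₀^{2π/N_s} 1{ max_{i,j} ⟨X_{i,j}(θ̄', ω̄'), u⟩/(r·e) < (r² + e² − d²)/(2·r·e) } dω̄' dθ̄', where inside the integral the satellite positions X_{i,j}(θ̄', ω̄') are computed from the deterministic offsets (θ̄', ω̄'). -/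
open Real MeasureTheory ProbabilityTheory
open scoped Classical

/-- The typical user at latitude `l` on the Earth sphere of radius `e`:
`u = (e·cos l, 0, e·sin l)`. -/
noncomputable def userPos (e l : ℝ) : EuclideanSpace ℝ (Fin 3) :=
  WithLp.toLp 2 ![e * cos l, 0, e * sin l]

/-- The position `X_{i,j}` of the `j`-th satellite on the `i`-th orbit of a Walker
constellation with `No` orbits, `Ns` satellites per orbit, inclination `φ`, orbit
radius `r` and offsets `(θ̄, ω̄)`: the orbit longitude is `θ_i = 2πi/No + θ̄` and the
satellite phase is `ω_j = 2πj/Ns + ω̄`. -/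
noncomputable def satXij (No Ns : ℕ) (φ r θb ωb : ℝ) (i : Fin No) (j : Fin Ns) :
    EuclideanSpace ℝ (Fin 3) :=
  satPos (2 * π * ((i : ℕ) + 1) / No + θb) (2 * π * ((j : ℕ) + 1) / Ns + ωb) φ r

open Set
open scoped ENNReal

/-!
Every satellite lies on the sphere of radius `r` and the user on the sphere of radius `e`, so
by the law of cosines `‖X - u‖ > d` is equivalent to `⟪X, u⟫ < (r² + e² - d²) / 2`: the nearest
satellite is farther than `d` exactly when the largest normalized inner product stays below the
threshold. Independent uniform offsets make `(θ̄, ω̄)` uniform on the rectangle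
`[0, 2π/No] × [0, 2π/Ns]`, so the probability of this event is its normalized area, which is the
iterated integral of its indicator.
-/

lemma norm_satPos (θ ω φ r : ℝ) : ‖satPos θ ω φ r‖ = |r| := by
  rw [EuclideanSpace.norm_eq, ← sqrt_sq_eq_abs, Fin.sum_univ_three]
  congr 1
  simp only [satPos, PiLp.toLp_apply, Matrix.cons_val, Real.norm_eq_abs, sq_abs, mul_pow,
    sq_sqrt (by positivity : 0 ≤ cos ω ^ 2 + sin ω ^ 2 * cos φ ^ 2)]
  linear_combination (r ^ 2 * (cos ω ^ 2 + sin ω ^ 2 * cos φ ^ 2)) *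
      sin_sq_add_cos_sq (arctan (tan ω * cos φ) + θ) + r ^ 2 * sin_sq_add_cos_sq ω +
    (r ^ 2 * sin ω ^ 2) * sin_sq_add_cos_sq φ

lemma norm_userPos (e l : ℝ) : ‖userPos e l‖ = |e| := by
  rw [EuclideanSpace.norm_eq, ← sqrt_sq_eq_abs, Fin.sum_univ_three]
  congr 1
  simp only [userPos, PiLp.toLp_apply, Matrix.cons_val, Real.norm_eq_abs, sq_abs, mul_pow]
  linear_combination e ^ 2 * cos_sq_add_sin_sq l

lemma Measurable.satPos {α : Type*} [MeasurableSpace α] {f g : α → ℝ} (hf : Measurable f)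
    (hg : Measurable g) (φ r : ℝ) : Measurable fun x => satPos (f x) (g x) φ r := by
  have htan : Measurable tan := by
    rw [show tan = fun x => sin x / cos x from funext tan_eq_sin_div_cos]
    fun_prop
  refine (WithLp.measurable_toLp 2 (Fin 3 → ℝ)).comp (measurable_pi_iff.2 fun i => ?_)
  fin_cases i <;> simp only [Fin.zero_eta, Fin.mk_one, Fin.reduceFinMk, Matrix.cons_val] <;>
    fun_prop

lemma lt_norm_sub_iff_two_inner_lt {E : Type*} [NormedAddCommGroup E] [InnerProductSpace ℝ E]
    (a b : E) {d : ℝ} (hd : 0 ≤ d) :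
    d < ‖a - b‖ ↔ 2 * inner ℝ a b < ‖a‖ ^ 2 + ‖b‖ ^ 2 - d ^ 2 := by
  rw [← sq_lt_sq₀ hd (norm_nonneg _), norm_sub_sq_real]
  constructor <;> intro <;> linarith

lemma lt_norm_satPos_sub_userPos_iff (θ ω φ l : ℝ) {r e d : ℝ} (hr : 0 < r) (he : 0 < e)
    (hd : 0 ≤ d) :
    d < ‖satPos θ ω φ r - userPos e l‖ ↔
      inner ℝ (satPos θ ω φ r) (userPos e l) / (r * e) <
        (r ^ 2 + e ^ 2 - d ^ 2) / (2 * r * e) := by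
  rw [lt_norm_sub_iff_two_inner_lt _ _ hd, norm_satPos, norm_userPos, sq_abs, sq_abs,
    div_lt_div_iff₀ (by positivity) (by positivity),
    show ∀ x : ℝ, x * (2 * r * e) = 2 * x * (r * e) from fun x => by ring,
    mul_lt_mul_iff_left₀ (by positivity)]

lemma Finite.ciSup_lt_iff {ι α : Type*} [Finite ι] [Nonempty ι]
    [ConditionallyCompleteLinearOrder α] {f : ι → α} {a : α} : (⨆ i, f i) < a ↔ ∀ i, f i < a := by
  obtain ⟨i, hi⟩ := exists_eq_ciSup_of_finite (f := f)
  exact ⟨fun h j => (Finite.le_ciSup f j).trans_lt h, fun h => hi ▸ h i⟩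

lemma Finite.lt_ciInf_iff {ι α : Type*} [Finite ι] [Nonempty ι]
    [ConditionallyCompleteLinearOrder α] {f : ι → α} {a : α} : a < (⨅ i, f i) ↔ ∀ i, a < f i :=
  Finite.ciSup_lt_iff (α := αᵒᵈ)

lemma MeasureTheory.pdf.IsUniform.prodMk {Ω E F : Type*} [MeasurableSpace Ω]
    [MeasurableSpace E] [MeasurableSpace F] {P : Measure Ω} [IsFiniteMeasure P]
    {μ : Measure E} {ν : Measure F} [SFinite μ] [SFinite ν] {X : Ω → E} {Y : Ω → F}
    {s : Set E} {t : Set F} (hX : IsUniform X s P μ) (hY : IsUniform Y t P ν)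
    (hXY : IndepFun X Y P) (hs₀ : μ s ≠ 0) (hs : μ s ≠ ∞) (ht₀ : ν t ≠ 0) (ht : ν t ≠ ∞) :
    IsUniform (fun ω => (X ω, Y ω)) (s ×ˢ t) P (μ.prod ν) := by
  rw [IsUniform, (indepFun_iff_map_prod_eq_prod_map_map (hX.aemeasurable hs₀ hs)
    (hY.aemeasurable ht₀ ht)).mp hXY, hX, hY, ProbabilityTheory.cond, ProbabilityTheory.cond,
    ProbabilityTheory.cond, Measure.prod_smul_left, Measure.prod_smul_right, smul_smul,
    Measure.prod_restrict, Measure.prod_prod, ENNReal.mul_inv (.inl hs₀) (.inl hs)]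

lemma intervalIntegral_intervalIntegral_indicator_one {A : Set (ℝ × ℝ)} (hA : MeasurableSet A)
    {a b c d : ℝ} (hab : a ≤ b) (hcd : c ≤ d) :
    ∫ x in a..b, ∫ y in c..d, A.indicator (1 : ℝ × ℝ → ℝ) (x, y) =
      volume.real (Icc a b ×ˢ Icc c d ∩ A) := by
  have hbox : volume.restrict (Ioc a b ×ˢ Ioc c d) = volume.restrict (Icc a b ×ˢ Icc c d) := by
    rw [Measure.volume_eq_prod, ← Measure.prod_restrict, ← Measure.prod_restrict,
      Measure.restrict_congr_set Ioc_ae_eq_Icc, Measure.restrict_congr_set Ioc_ae_eq_Icc]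
  have hint : IntegrableOn (A.indicator (1 : ℝ × ℝ → ℝ)) (Ioc a b ×ˢ Ioc c d) :=
    (integrableOn_const ((measure_mono (prod_mono Ioc_subset_Icc_self Ioc_subset_Icc_self))
      |>.trans_lt (isCompact_Icc.prod isCompact_Icc).measure_lt_top).ne).indicator hA
  simp_rw [intervalIntegral.integral_of_le hab, intervalIntegral.integral_of_le hcd]
  rw [← setIntegral_prod _ hint, ← Measure.volume_eq_prod, hbox, integral_indicator_one hA,
    measureReal_restrict_apply hA, inter_comm]

lemma MeasureTheory.pdf.IsUniform.measure_prodMk_preimage_eq_integral {Ω : Type*}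
    [MeasurableSpace Ω] {P : Measure Ω} [IsFiniteMeasure P] {X Y : Ω → ℝ} {a b c d : ℝ}
    (hX : IsUniform X (Icc a b) P) (hY : IsUniform Y (Icc c d) P) (hXY : IndepFun X Y P)
    (hab : a < b) (hcd : c < d) {A : Set (ℝ × ℝ)} (hA : MeasurableSet A) :
    P ((fun ω => (X ω, Y ω)) ⁻¹' A) = ENNReal.ofReal (((b - a) * (d - c))⁻¹ *
      ∫ x in a..b, ∫ y in c..d, A.indicator (1 : ℝ × ℝ → ℝ) (x, y)) := by
  have hpos : 0 < (b - a) * (d - c) := mul_pos (sub_pos.2 hab) (sub_pos.2 hcd)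
  have hbox : volume (Icc a b ×ˢ Icc c d) = ENNReal.ofReal ((b - a) * (d - c)) := by
    rw [Measure.volume_eq_prod, Measure.prod_prod, Real.volume_Icc, Real.volume_Icc,
      ENNReal.ofReal_mul (sub_pos.2 hab).le]
  have hU := hX.prodMk hY hXY (by simp [hab]) (by simp) (by simp [hcd]) (by simp)
  rw [← Measure.volume_eq_prod] at hU
  have hboxA : volume (Icc a b ×ˢ Icc c d ∩ A) ≠ ∞ :=
    ((measure_mono inter_subset_left).trans_lt (hbox ▸ ENNReal.ofReal_lt_top)).ne
  rw [hU.measure_preimage (hbox ▸ (ENNReal.ofReal_pos.2 hpos).ne')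
      (hbox ▸ ENNReal.ofReal_ne_top) hA,
    intervalIntegral_intervalIntegral_indicator_one hA hab.le hcd.le, hbox,
    ENNReal.ofReal_mul (inv_nonneg.2 hpos.le), ENNReal.ofReal_inv_of_pos hpos,
    ofReal_measureReal hboxA, ENNReal.div_eq_inv_mul]

theorem ccdf_nearest_satellite_distance_general
    {Ω : Type*} [MeasureSpace Ω] [IsProbabilityMeasure (ℙ : Measure Ω)]
    (r e : ℝ) (he : 0 < e) (her : e < r)
    (No Ns : ℕ) (hNo : 1 ≤ No) (hNs : 1 ≤ Ns)
    (φ lu : ℝ)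
    (θb ωb : Ω → ℝ)
    (hθ : pdf.IsUniform θb (Set.Icc 0 (2 * π / No)) ℙ volume)
    (hω : pdf.IsUniform ωb (Set.Icc 0 (2 * π / Ns)) ℙ volume)
    (hindep : IndepFun θb ωb ℙ)
    (d : ℝ) (hd1 : r - e < d) :
    ℙ {x | d < ⨅ ij : Fin No × Fin Ns,
        ‖satXij No Ns φ r (θb x) (ωb x) ij.1 ij.2 - userPos e lu‖} =
      ENNReal.ofReal ((No * Ns / (4 * π ^ 2)) *
        ∫ θ' in (0 : ℝ)..(2 * π / No), ∫ ω' in (0 : ℝ)..(2 * π / Ns),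
          if (⨆ ij : Fin No × Fin Ns,
                (inner ℝ (satXij No Ns φ r θ' ω' ij.1 ij.2) (userPos e lu) : ℝ) /
                  (r * e)) <
              (r ^ 2 + e ^ 2 - d ^ 2) / (2 * r * e)
          then (1 : ℝ) else 0) := by
  have hr : 0 < r := he.trans her
  have hNo' : (0 : ℝ) < No := by exact_mod_cast hNo
  have hNs' : (0 : ℝ) < Ns := by exact_mod_cast hNs
  have : Nonempty (Fin No × Fin Ns) := ⟨(⟨0, hNo⟩, ⟨0, hNs⟩)⟩
  set A : Set (ℝ × ℝ) := {p | ∀ ij : Fin No × Fin Ns,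
    inner ℝ (satXij No Ns φ r p.1 p.2 ij.1 ij.2) (userPos e lu) / (r * e) <
      (r ^ 2 + e ^ 2 - d ^ 2) / (2 * r * e)}
  have hA : MeasurableSet A := by
    simp only [A, ofPred_forall]
    exact .iInter fun ij => measurableSet_lt
      ((Measurable.satPos (measurable_fst.const_add _) (measurable_snd.const_add _) φ r
        ).inner_const.div_const _) measurable_const
  have hevent : {x | d < ⨅ ij : Fin No × Fin Ns,
      ‖satXij No Ns φ r (θb x) (ωb x) ij.1 ij.2 - userPos e lu‖} =
      (fun x => (θb x, ωb x)) ⁻¹' A := by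
    ext x
    simp only [mem_ofPred_eq, mem_preimage, A, Finite.lt_ciInf_iff]
    exact forall_congr' fun ij => lt_norm_satPos_sub_userPos_iff _ _ _ _ hr he (by linarith)
  rw [hevent, hθ.measure_prodMk_preimage_eq_integral hω hindep (by positivity) (by positivity) hA]
  congr 2
  · field_simp
    ring
  · refine intervalIntegral.integral_congr fun θ' _ =>
      intervalIntegral.integral_congr fun ω' _ => ?_
    simp only [indicator_apply, Pi.one_apply, A, mem_ofPred_eq, Finite.ciSup_lt_iff]

/-- **Theorem 3 (CCDF of the distance to the nearest satellite).**
Let `0 < e < r`, `No, Ns ≥ 1`, and let `θ̄, ω̄` be independent random variables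
uniform on `[0, 2π/No]` and `[0, 2π/Ns]` respectively. Let
`D = min_{i,j} ‖X_{i,j} − u‖` be the distance from the typical user
`u = (e·cos l_u, 0, e·sin l_u)` to its nearest satellite. Then for every
`d ∈ (r − e, √(r² − e²))`,
`P(D > d) = (No·Ns/(4π²)) ∫₀^{2π/No} ∫₀^{2π/Ns}
  1{max_{i,j} ⟨X_{i,j}(θ̄', ω̄'), u⟩/(r·e) < (r² + e² − d²)/(2·r·e)} dω̄' dθ̄'`. -/
theorem ccdf_nearest_satellite_distance
    {Ω : Type*} [MeasureSpace Ω] [IsProbabilityMeasure (ℙ : Measure Ω)]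
    (r e : ℝ) (he : 0 < e) (her : e < r)
    (No Ns : ℕ) (hNo : 1 ≤ No) (hNs : 1 ≤ Ns)
    (φ lu : ℝ)
    (θb ωb : Ω → ℝ)
    (hθ : pdf.IsUniform θb (Set.Icc 0 (2 * π / No)) ℙ volume)
    (hω : pdf.IsUniform ωb (Set.Icc 0 (2 * π / Ns)) ℙ volume)
    (hindep : IndepFun θb ωb ℙ)
    (d : ℝ) (hd1 : r - e < d) (hd2 : d < Real.sqrt (r ^ 2 - e ^ 2)) :
    ℙ {x | d < ⨅ ij : Fin No × Fin Ns,
        ‖satXij No Ns φ r (θb x) (ωb x) ij.1 ij.2 - userPos e lu‖} =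
      ENNReal.ofReal ((No * Ns / (4 * π ^ 2)) *
        ∫ θ' in (0 : ℝ)..(2 * π / No), ∫ ω' in (0 : ℝ)..(2 * π / Ns),
          if (⨆ ij : Fin No × Fin Ns,
                (inner ℝ (satXij No Ns φ r θ' ω' ij.1 ij.2) (userPos e lu) : ℝ) /
                  (r * e)) <
              (r ^ 2 + e ^ 2 - d ^ 2) / (2 * r * e)
          then (1 : ℝ) else 0) :=
  ccdf_nearest_satellite_distance_general r e he her No Ns hNo hNs φ lu θb ωb hθ hω hindep d hd1
end

section
/- Let 0 < e < r, let N_o, N_s ≥ 1 be integers, let φ, l_u ∈ ℝ, p > 0, α > 0, s ≥ 0, g_t, g_r > 0 and d_g > 0. Let θ̄ and ω̄ be independent random variables uniformly distributed on [0, 2π/N_o] and [0, 2π/N_s], and let (H_{i,j}), i = 1,…,N_o, j = 1,…,N_s, be i.i.d. nonnegative random variables, independent of (θ̄, ω̄), with Laplace transform L_H(x) = E[exp(−x·H)]. Define the total interference T = Σ_{i,j} c_{i,j} · p · G_{i,j} · H_{i,j} · ‖X_{i,j} − u‖^{−α}. Then E[exp(−s·T)] = (N_o·N_s/(4π²)) ·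 ∫₀^{2π/N_o} ∫₀^{2π/N_s} Π_{i,j : c_{i,j} = 1} L_H( s·p·G_{i,j}·‖X_{i,j} − u‖^{−α} ) dω̄' dθ̄', where in the integrand the satellite positions, visibility indicators c_{i,j} and gains G_{i,j} are computed from the deterministic offsets (θ̄', ω̄'). -/
open Real MeasureTheory ProbabilityTheory
open scoped Classical

/-- Visibility indicator: `c = 1` if `⟨X, u⟩/(‖X‖·‖u‖) ≥ e/r`, `c = 0` otherwise. -/
noncomputable def visInd (r e : ℝ) (X u : EuclideanSpace ℝ (Fin 3)) : ℝ :=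
  if e / r ≤ (inner ℝ X u : ℝ) / (‖X‖ * ‖u‖) then 1 else 0

/-- Antenna gain: `G = g_t·g_r` if `⟨X, u⟩/(‖X‖·‖u‖) ≥ (r² + e² − d_g²)/(2·r·e)`,
and `G = g_r` otherwise. -/
noncomputable def gain (r e dg gt gr : ℝ) (X u : EuclideanSpace ℝ (Fin 3)) : ℝ :=
  if (r ^ 2 + e ^ 2 - dg ^ 2) / (2 * r * e) ≤ (inner ℝ X u : ℝ) / (‖X‖ * ‖u‖) then
    gt * gr
  else gr

/-!
Conditionally on the offsets `(θ̄, ω̄)`, the total interference is a nonnegative combination of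
the fadings with deterministic weights, so by independence of the fadings its Laplace transform
is the product of the `L_H` evaluated at those weights; an invisible satellite has weight `0` and
contributes the factor `1`. Since the offsets are independent of the fadings, the fadings can be
integrated out first (Fubini on the product law), and the uniform product law of the offsets
turns the remaining expectation into the normalized integral over the rectangle
`[0, 2π/N_o] × [0, 2π/N_s]`.
-/

theorem ProbabilityTheory.IndepFun.integral_comp_eq_integral_integral_comp
    {Ω α β E : Type*} [MeasurableSpace Ω] [MeasurableSpace α] [MeasurableSpace β]
    [NormedAddCommGroup E] [NormedSpace ℝ E] {μ : Measure Ω} [IsFiniteMeasure μ]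
    {X : Ω → α} {Y : Ω → β} (hXY : IndepFun X Y μ) (hX : AEMeasurable X μ)
    (hY : AEMeasurable Y μ) {f : α → β → E} (hf : StronglyMeasurable (Function.uncurry f))
    (hfi : Integrable (fun ω => f (X ω) (Y ω)) μ) :
    ∫ ω, f (X ω) (Y ω) ∂μ = ∫ ω, ∫ ω', f (X ω) (Y ω') ∂μ ∂μ := by
  have hmap : μ.map (fun ω => (X ω, Y ω)) = (μ.map X).prod (μ.map Y) :=
    (indepFun_iff_map_prod_eq_prod_map_map hX hY).mp hXY
  have hint : Integrable (Function.uncurry f) ((μ.map X).prod (μ.map Y)) := by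
    rw [← hmap]
    exact (integrable_map_measure hf.aestronglyMeasurable (hX.prodMk hY)).mpr hfi
  calc ∫ ω, f (X ω) (Y ω) ∂μ
      = ∫ z, Function.uncurry f z ∂((μ.map X).prod (μ.map Y)) := by
        rw [← hmap, integral_map (hX.prodMk hY) hf.aestronglyMeasurable]; rfl
    _ = ∫ x, ∫ y, f x y ∂(μ.map Y) ∂(μ.map X) := integral_prod _ hint
    _ = ∫ ω, ∫ y, f (X ω) y ∂(μ.map Y) ∂μ :=
        integral_map hX hf.integral_prod_right.aestronglyMeasurable
    _ = ∫ ω, ∫ ω', f (X ω) (Y ω') ∂μ ∂μ := by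
        congr 1 with ω
        exact integral_map hY (hf.comp_measurable measurable_prodMk_left).aestronglyMeasurable

theorem ProbabilityTheory.iIndepFun.integral_exp_neg_sum_mul {Ω ι : Type*} [MeasurableSpace Ω]
    {μ : Measure Ω} [Fintype ι] {H : ι → Ω → ℝ} (hH : iIndepFun H μ)
    (hHm : ∀ i, AEMeasurable (H i) μ) (a : ι → ℝ) :
    ∫ ω, exp (-∑ i, a i * H i ω) ∂μ = ∏ i, ∫ ω, exp (-(a i * H i ω)) ∂μ := by
  simp_rw [← Finset.sum_neg_distrib, Real.exp_sum]
  exact hH.integral_fun_prod_comp hHm fun i =>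
    (by fun_prop : Continuous fun y => exp (-(a i * y))).aestronglyMeasurable

namespace MeasureTheory.pdf.IsUniform

variable {Ω E : Type*} [MeasurableSpace Ω] [NormedAddCommGroup E] [NormedSpace ℝ E]
  {μ : Measure Ω}

theorem aemeasurable_of_Icc {X : Ω → ℝ} {a b : ℝ} (hab : a < b)
    (hX : pdf.IsUniform X (Set.Icc a b) μ) : AEMeasurable X μ :=
  hX.aemeasurable (by simp [Real.volume_Icc, hab]) (by simp [Real.volume_Icc])

theorem integral_comp_Icc {X : Ω → ℝ} {a b : ℝ} (hab : a < b)
    (hX : pdf.IsUniform X (Set.Icc a b) μ) {f : ℝ → E} (hf : StronglyMeasurable f) :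
    ∫ x, f (X x) ∂μ = (b - a)⁻¹ • ∫ t in a..b, f t := by
  rw [← integral_map (hX.aemeasurable_of_Icc hab) hf.aestronglyMeasurable, hX,
    ProbabilityTheory.cond, integral_smul_measure, Real.volume_Icc,
    ← ENNReal.ofReal_inv_of_pos (sub_pos.mpr hab),
    ENNReal.toReal_ofReal (inv_nonneg.mpr (sub_pos.mpr hab).le), integral_Icc_eq_integral_Ioc,
    ← intervalIntegral.integral_of_le hab.le]

theorem integral_comp_Icc_prod [IsProbabilityMeasure μ] {θ ω : Ω → ℝ} {a₁ b₁ a₂ b₂ : ℝ}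
    (hab₁ : a₁ < b₁) (hab₂ : a₂ < b₂) (hθ : pdf.IsUniform θ (Set.Icc a₁ b₁) μ)
    (hω : pdf.IsUniform ω (Set.Icc a₂ b₂) μ) (hθω : IndepFun θ ω μ) {g : ℝ → ℝ → E}
    (hg : StronglyMeasurable (Function.uncurry g))
    (hgi : Integrable (fun x => g (θ x) (ω x)) μ) :
    ∫ x, g (θ x) (ω x) ∂μ =
      ((b₁ - a₁) * (b₂ - a₂))⁻¹ • ∫ t in a₁..b₁, ∫ u in a₂..b₂, g t u := by
  have inner : ∀ x, ∫ x', g (θ x) (ω x') ∂μ = (b₂ - a₂)⁻¹ • ∫ u in a₂..b₂, g (θ x) u :=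
    fun x => hω.integral_comp_Icc hab₂ (hg.comp_measurable measurable_prodMk_left)
  have hmeas : StronglyMeasurable fun t => ∫ u in a₂..b₂, g t u := by
    simp_rw [intervalIntegral.integral_of_le hab₂.le]
    exact hg.integral_prod_right
  rw [hθω.integral_comp_eq_integral_integral_comp (hθ.aemeasurable_of_Icc hab₁)
    (hω.aemeasurable_of_Icc hab₂) hg hgi]
  simp_rw [inner]
  rw [integral_smul, hθ.integral_comp_Icc hab₁ hmeas, smul_smul, mul_inv, mul_comm]

end MeasureTheory.pdf.IsUniform

theorem integral_exp_neg_sum_mul_of_isUniform_Icc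
    {Ω ι : Type*} [MeasurableSpace Ω] {μ : Measure Ω} [IsProbabilityMeasure μ] [Fintype ι]
    {θ ω : Ω → ℝ} {a₁ b₁ a₂ b₂ : ℝ} (hab₁ : a₁ < b₁) (hab₂ : a₂ < b₂)
    (hθ : pdf.IsUniform θ (Set.Icc a₁ b₁) μ) (hω : pdf.IsUniform ω (Set.Icc a₂ b₂) μ)
    (hθω : IndepFun θ ω μ) {H : ι → Ω → ℝ} (hHm : ∀ i, Measurable (H i))
    (hH0 : ∀ i x, 0 ≤ H i x) (hH : iIndepFun H μ)
    (hθωH : IndepFun (fun x => (θ x, ω x)) (fun x i => H i x) μ)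
    {W : ℝ → ℝ → ι → ℝ} (hWm : ∀ i, Measurable fun q : ℝ × ℝ => W q.1 q.2 i)
    (hW0 : ∀ t u i, 0 ≤ W t u i) :
    ∫ x, exp (-∑ i, W (θ x) (ω x) i * H i x) ∂μ =
      ((b₁ - a₁) * (b₂ - a₂))⁻¹ *
        ∫ t in a₁..b₁, ∫ u in a₂..b₂, ∏ i, ∫ x, exp (-(W t u i * H i x)) ∂μ := by
  set F : ℝ × ℝ → (ι → ℝ) → ℝ := fun q h => exp (-∑ i, W q.1 q.2 i * h i)
  have hFm : Measurable (Function.uncurry F) := by fun_prop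
  have hθωm : AEMeasurable (fun x => (θ x, ω x)) μ :=
    (hθ.aemeasurable_of_Icc hab₁).prodMk (hω.aemeasurable_of_Icc hab₂)
  have hHv : Measurable fun x i => H i x := measurable_pi_lambda _ hHm
  have hF_le : ∀ q x, ‖F q (H · x)‖ ≤ 1 := fun q x => by
    rw [Real.norm_eq_abs, Real.abs_exp, Real.exp_le_one_iff, neg_nonpos]
    exact Finset.sum_nonneg fun i _ => mul_nonneg (hW0 _ _ i) (hH0 i x)
  set g : ℝ → ℝ → ℝ := fun t u => ∫ x', F (t, u) (H · x') ∂μ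
  have hg : StronglyMeasurable (Function.uncurry g) :=
    (hFm.comp (measurable_fst.prodMk (hHv.comp measurable_snd))).stronglyMeasurable
      |>.integral_prod_right'
  have hg_le : ∀ t u, ‖g t u‖ ≤ 1 := fun t u => by
    simpa using norm_integral_le_of_norm_le_const (μ := μ) (.of_forall (hF_le (t, u)))
  calc ∫ x, F (θ x, ω x) (H · x) ∂μ
      = ∫ x, g (θ x) (ω x) ∂μ :=
        hθωH.integral_comp_eq_integral_integral_comp hθωm hHv.aemeasurable
          hFm.stronglyMeasurable <| Integrable.of_bound
            (hFm.comp_aemeasurable (hθωm.prodMk hHv.aemeasurable)).aestronglyMeasurable 1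
            (.of_forall fun x => hF_le _ x)
    _ = ((b₁ - a₁) * (b₂ - a₂))⁻¹ * ∫ t in a₁..b₁, ∫ u in a₂..b₂, g t u :=
        hθ.integral_comp_Icc_prod hab₁ hab₂ hω hθω hg <| Integrable.of_bound
          (hg.measurable.comp_aemeasurable hθωm).aestronglyMeasurable 1
          (.of_forall fun x => hg_le _ _)
    _ = _ := by
        simp only [g, F, hH.integral_exp_neg_sum_mul fun i => (hHm i).aemeasurable]

theorem measurable_satPos (φ r : ℝ) : Measurable fun q : ℝ × ℝ => satPos q.1 q.2 φ r := by
  have htan : Measurable tan := by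
    rw [show tan = fun x => sin x / cos x from funext tan_eq_sin_div_cos]
    fun_prop
  unfold satPos
  fun_prop

theorem measurable_satXij (No Ns : ℕ) (φ r : ℝ) (i : Fin No) (j : Fin Ns) :
    Measurable fun q : ℝ × ℝ => satXij No Ns φ r q.1 q.2 i j := by
  unfold satXij
  exact (measurable_satPos φ r).comp (f := fun q : ℝ × ℝ =>
    (2 * π * ((i : ℕ) + 1) / No + q.1, 2 * π * ((j : ℕ) + 1) / Ns + q.2)) (by fun_prop)

noncomputable def interferenceWeight (r e dg gt gr p α : ℝ) (u X : EuclideanSpace ℝ (Fin 3)) :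
    ℝ :=
  visInd r e X u * p * gain r e dg gt gr X u * ‖X - u‖ ^ (-α)

section interferenceWeight

variable {r e dg gt gr p α : ℝ} {u : EuclideanSpace ℝ (Fin 3)}

theorem measurable_interferenceWeight : Measurable (interferenceWeight r e dg gt gr p α u) := by
  have hcos : Measurable fun X : EuclideanSpace ℝ (Fin 3) => inner ℝ X u / (‖X‖ * ‖u‖) := by
    fun_prop
  unfold interferenceWeight visInd gain
  exact (((measurable_const.ite (measurableSet_le measurable_const hcos) measurable_const).mul
    measurable_const).mul (measurable_const.ite (measurableSet_le measurable_const hcos)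
    measurable_const)).mul (by fun_prop)

theorem interferenceWeight_nonneg (hp : 0 ≤ p) (hgt : 0 ≤ gt) (hgr : 0 ≤ gr)
    (X : EuclideanSpace ℝ (Fin 3)) : 0 ≤ interferenceWeight r e dg gt gr p α u X := by
  unfold interferenceWeight visInd gain
  have := rpow_nonneg (norm_nonneg (X - u)) (-α)
  split_ifs <;> positivity

theorem integral_exp_neg_mul_interferenceWeight_mul {Ω : Type*} [MeasurableSpace Ω]
    {μ : Measure Ω} [IsProbabilityMeasure μ] (Y : Ω → ℝ) (s : ℝ) (X : EuclideanSpace ℝ (Fin 3)) :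
    ∫ x, exp (-(s * interferenceWeight r e dg gt gr p α u X * Y x)) ∂μ =
      if visInd r e X u = 1 then
        ∫ x, exp (-(s * p * gain r e dg gt gr X u * ‖X - u‖ ^ (-α) * Y x)) ∂μ
      else 1 := by
  unfold interferenceWeight
  split_ifs with h
  · simp_rw [h]
    ring_nf
  · have h0 : visInd r e X u = 0 := by
      unfold visInd at h ⊢
      split_ifs at h ⊢ <;> simp_all
    simp [h0]

end interferenceWeight

theorem laplace_transform_total_interference_general
    {Ω : Type*} [MeasureSpace Ω] [IsProbabilityMeasure (ℙ : Measure Ω)]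
    (r e : ℝ)
    (No Ns : ℕ) (hNo : 1 ≤ No) (hNs : 1 ≤ Ns)
    (φ lu p α s gt gr dg : ℝ)
    (hp : 0 < p) (hs : 0 ≤ s)
    (hgt : 0 < gt) (hgr : 0 < gr)
    (θb ωb : Ω → ℝ)
    (hθ : pdf.IsUniform θb (Set.Icc 0 (2 * π / No)) ℙ volume)
    (hω : pdf.IsUniform ωb (Set.Icc 0 (2 * π / Ns)) ℙ volume)
    (hθω : IndepFun θb ωb ℙ)
    (H : Fin No × Fin Ns → Ω → ℝ)
    (hHmeas : ∀ ij, Measurable (H ij))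
    (hHnonneg : ∀ ij x, 0 ≤ H ij x)
    (hHiid : iIndepFun H ℙ)
    (hHindep : IndepFun (fun x => (θb x, ωb x)) (fun x ij => H ij x) ℙ)
    (LH : ℝ → ℝ)
    (hLH : ∀ ij x, LH x = ∫ a, Real.exp (-(x * H ij a)) ∂ℙ) :
    (∫ x, Real.exp (-(s * ∑ ij : Fin No × Fin Ns,
        visInd r e (satXij No Ns φ r (θb x) (ωb x) ij.1 ij.2) (userPos e lu) * p *
          gain r e dg gt gr (satXij No Ns φ r (θb x) (ωb x) ij.1 ij.2)
            (userPos e lu) *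
          H ij x *
          ‖satXij No Ns φ r (θb x) (ωb x) ij.1 ij.2 - userPos e lu‖ ^ (-α))) ∂ℙ) =
      (No * Ns / (4 * π ^ 2)) *
        ∫ θ' in (0 : ℝ)..(2 * π / No), ∫ ω' in (0 : ℝ)..(2 * π / Ns),
          ∏ ij : Fin No × Fin Ns,
            if visInd r e (satXij No Ns φ r θ' ω' ij.1 ij.2) (userPos e lu) = 1
            then
              LH (s * p *
                gain r e dg gt gr (satXij No Ns φ r θ' ω' ij.1 ij.2) (userPos e lu) *
                ‖satXij No Ns φ r θ' ω' ij.1 ij.2 - userPos e lu‖ ^ (-α))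
            else 1 := by
  have hperiod : ∀ {n : ℕ}, 1 ≤ n → (0 : ℝ) < 2 * π / n := fun {n} hn => by
    have : (0 : ℝ) < n := by exact_mod_cast hn
    positivity
  set W : ℝ → ℝ → Fin No × Fin Ns → ℝ := fun t u ij =>
    s * interferenceWeight r e dg gt gr p α (userPos e lu) (satXij No Ns φ r t u ij.1 ij.2)
  have hW : ∀ t u ij, 0 ≤ W t u ij := fun t u ij =>
    mul_nonneg hs (interferenceWeight_nonneg hp.le hgt.le hgr.le _)
  calc _ = ∫ x, exp (-∑ ij, W (θb x) (ωb x) ij * H ij x) ∂ℙ := by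
        congr 1 with x
        rw [Finset.mul_sum]
        congr 2
        refine Finset.sum_congr rfl fun ij _ => ?_
        simp only [W, interferenceWeight]
        ring
    _ = _ := integral_exp_neg_sum_mul_of_isUniform_Icc (hperiod hNo) (hperiod hNs) hθ hω hθω
        hHmeas hHnonneg hHiid hHindep (fun ij => measurable_const.mul
          (measurable_interferenceWeight.comp (measurable_satXij No Ns φ r ij.1 ij.2))) hW
    _ = _ := by
        simp only [W, integral_exp_neg_mul_interferenceWeight_mul]
        simp only [← hLH, sub_zero]
        field_simp
        ring

/-- **Theorem 4 (Laplace transform of the total interference).**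
With independent uniform offsets `θ̄ ~ U[0, 2π/No]`, `ω̄ ~ U[0, 2π/Ns]` and i.i.d.
nonnegative fadings `H_{i,j}` independent of `(θ̄, ω̄)` with Laplace transform
`L_H(x) = E[e^{−xH}]`, the total interference
`T = Σ_{i,j} c_{i,j}·p·G_{i,j}·H_{i,j}·‖X_{i,j} − u‖^{−α}` satisfies
`E[e^{−sT}] = (No·Ns/(4π²)) ∫₀^{2π/No} ∫₀^{2π/Ns}
  Π_{i,j : c_{i,j}=1} L_H(s·p·G_{i,j}·‖X_{i,j} − u‖^{−α}) dω̄' dθ̄'`. -/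
theorem laplace_transform_total_interference
    {Ω : Type*} [MeasureSpace Ω] [IsProbabilityMeasure (ℙ : Measure Ω)]
    (r e : ℝ) (he : 0 < e) (her : e < r)
    (No Ns : ℕ) (hNo : 1 ≤ No) (hNs : 1 ≤ Ns)
    (φ lu p α s gt gr dg : ℝ)
    (hp : 0 < p) (hα : 0 < α) (hs : 0 ≤ s)
    (hgt : 0 < gt) (hgr : 0 < gr) (hdg : 0 < dg)
    (θb ωb : Ω → ℝ)
    (hθ : pdf.IsUniform θb (Set.Icc 0 (2 * π / No)) ℙ volume)
    (hω : pdf.IsUniform ωb (Set.Icc 0 (2 * π / Ns)) ℙ volume)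
    (hθω : IndepFun θb ωb ℙ)
    (H : Fin No × Fin Ns → Ω → ℝ)
    (hHmeas : ∀ ij, Measurable (H ij))
    (hHnonneg : ∀ ij x, 0 ≤ H ij x)
    (hHiid : iIndepFun H ℙ)
    (hHident : ∀ ij ij', IdentDistrib (H ij) (H ij') ℙ ℙ)
    (hHindep : IndepFun (fun x => (θb x, ωb x)) (fun x ij => H ij x) ℙ)
    (LH : ℝ → ℝ)
    (hLH : ∀ ij x, LH x = ∫ a, Real.exp (-(x * H ij a)) ∂ℙ) :
    (∫ x, Real.exp (-(s * ∑ ij : Fin No × Fin Ns,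
        visInd r e (satXij No Ns φ r (θb x) (ωb x) ij.1 ij.2) (userPos e lu) * p *
          gain r e dg gt gr (satXij No Ns φ r (θb x) (ωb x) ij.1 ij.2)
            (userPos e lu) *
          H ij x *
          ‖satXij No Ns φ r (θb x) (ωb x) ij.1 ij.2 - userPos e lu‖ ^ (-α))) ∂ℙ) =
      (No * Ns / (4 * π ^ 2)) *
        ∫ θ' in (0 : ℝ)..(2 * π / No), ∫ ω' in (0 : ℝ)..(2 * π / Ns),
          ∏ ij : Fin No × Fin Ns,
            if visInd r e (satXij No Ns φ r θ' ω' ij.1 ij.2) (userPos e lu) = 1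
            then
              LH (s * p *
                gain r e dg gt gr (satXij No Ns φ r θ' ω' ij.1 ij.2) (userPos e lu) *
                ‖satXij No Ns φ r θ' ω' ij.1 ij.2 - userPos e lu‖ ^ (-α))
            else 1 :=
  laplace_transform_total_interference_general r e No Ns hNo hNs φ lu p α s gt gr dg hp hs hgt hgr
    θb ωb hθ hω hθω H hHmeas hHnonneg hHiid hHindep LH hLH
end
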